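/- arXiv:2311.06974 — 7 statements merged into one kernel-verified Lean document; each statement's English description precedes it below -/
import Mathlib

section
/- For every even n ≥ 4, the restricted rotator graph RR_n({2,n}) has no Hamilton cycle; that is, there is no Hamilton sequence for RR_n({2,n}). -/
open Equiv

/-- The prefix-rotation `σ_r = (1 2 ⋯ r)` of positions, 0-indexed as a
permutation of `Fin n` (it sends position `i` to `i+1` for `i < r-1`,
sends position `r-1` to `0`, and fixes all positions `≥ r`). -/
def sigmaRot (n r : ℕ) : Equiv.Perm (Fin n) :=
  if h : r - 1 < n then Fin.cycleRange ⟨r - 1, h⟩ else 1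

/-- The permutation `σ_{r₁}σ_{r₂}⋯σ_{r_i}` (composed left-to-right) given by the
first `i` entries of the sequence `S`. -/
def partialProd (n : ℕ) (S : List ℕ) (i : ℕ) : Equiv.Perm (Fin n) :=
  ((S.take i).map (sigmaRot n)).prod

/-- `S` is a Hamilton sequence for the restricted rotator graph `RR_n(R)`. -/
def IsHamiltonSeq (n : ℕ) (R : Set ℕ) (S : List ℕ) : Prop :=
  S.length = Nat.factorial n ∧
  (∀ r ∈ S, r ∈ R) ∧
  (∀ i < Nat.factorial n, ∀ j < Nat.factorial n,
      partialProd n S i = partialProd n S j → i = j) ∧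
  partialProd n S S.length = 1

/-- The value (0-indexed symbol) at the last position of the string `a`;
the one-line-notation symbol there is `lastVal a + 1`. -/
def lastVal {n : ℕ} (a : Equiv.Perm (Fin n)) : ℕ :=
  if h : 0 < n then ((a ⟨n - 1, Nat.sub_lt h Nat.one_pos⟩ : Fin n) : ℕ) else 0

/-- Arc relation of the restricted incomplete rotator graph `RIR_n(R,m)`:
both endpoints have last symbol `≤ m` and `b = a·σ_r` for some `r ∈ R`. -/
def RIRAdj (n m : ℕ) (R : Set ℕ) (a b : Equiv.Perm (Fin n)) : Prop :=
  lastVal a < m ∧ lastVal b < m ∧ ∃ r ∈ R, b = a * sigmaRot n r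

/-- `RIR_n(R,m)` is strongly connected. -/
def StronglyConnectedRIR (n m : ℕ) (R : Set ℕ) : Prop :=
  ∀ a b : Equiv.Perm (Fin n), lastVal a < m → lastVal b < m →
    Relation.ReflTransGen (RIRAdj n m R) a b

/-- The reuse operation: replace each entry `r` by `n,…,n,n+1-r` (`n-1` copies of `n`). -/
def reuseOp (n : ℕ) (S : List ℕ) : List ℕ :=
  (S.map (fun r => List.replicate (n - 1) n ++ [n + 1 - r])).flatten

/-- Corbett's reuse sequences: `C₁ = (1)` and `C_k = reuse_k(C_{k-1})`. -/
def corbettC : ℕ → List ℕ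
  | 0 => []
  | 1 => [1]
  | k + 2 => reuseOp (k + 2) (corbettC (k + 1))

/-- The recycle operation: replace each entry `r` by
`n, n, n-1, …, n-1, n, …, n` (`r-1` copies of `n-1`, then `n-r-1` copies of `n`). -/
def recycleOp (n : ℕ) (S : List ℕ) : List ℕ :=
  (S.map (fun r => n :: n :: (List.replicate (r - 1) (n - 1) ++ List.replicate (n - r - 1) n))).flatten

/-- The canonical recycle sequences: `D₁ = (1)` and `D_k = recycle_k(D_{k-1})`. -/
def recycleD : ℕ → List ℕ
  | 0 => []
  | 1 => [1]
  | k + 2 => recycleOp (k + 2) (recycleD (k + 1))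

/-- The rewind operation `rewind_m(S)` (with `S = T, n-1, n-1`):
`(T,n-1,n)`, then `m-2` copies of `(T,n)`, then `(T,n-1,n)`, then `m-2` copies of `n`. -/
def rewindOp (n m : ℕ) (S : List ℕ) : List ℕ :=
  (S.dropLast.dropLast ++ [n - 1, n])
    ++ (List.replicate (m - 2) (S.dropLast.dropLast ++ [n])).flatten
    ++ (S.dropLast.dropLast ++ [n - 1, n])
    ++ List.replicate (m - 2) n

/-- The canonical rewind sequences: `W₂ = (2,2)` and `W_k = rewind_k(W_{k-1})`. -/
def rewindW : ℕ → List ℕ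
  | 0 => []
  | 1 => []
  | 2 => [2, 2]
  | k + 3 => rewindOp (k + 3) (k + 3) (rewindW (k + 2))

/-- `S` is a Hamilton sequence for the restricted incomplete rotator graph `RIR_n(R,m)`,
starting from the string `n n-1 ⋯ 1` (which is `Fin.revPerm`). -/
def IsHamiltonSeqRIR (n m : ℕ) (R : Set ℕ) (S : List ℕ) : Prop :=
  S.length = m * Nat.factorial (n - 1) ∧
  (∀ r ∈ S, r ∈ R) ∧
  (∀ i < S.length, ∀ j < S.length,
      Fin.revPerm * partialProd n S i = Fin.revPerm * partialProd n S j → i = j) ∧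
  {b : Equiv.Perm (Fin n) | ∃ i < S.length, b = Fin.revPerm * partialProd n S i}
    = {b : Equiv.Perm (Fin n) | lastVal b < m} ∧
  Fin.revPerm * partialProd n S S.length = Fin.revPerm

/-- The cyclic shift `shift²` moving the first two entries to the end. -/
def shift2 (S : List ℕ) : List ℕ := S.drop 2 ++ S.take 2

/-!
Rankin–Swan parity argument. A Hamilton cycle through `Sₙ` with steps `a = σ₂`, `b = σₙ` makes
its successor map `f` a single `n!`-cycle on `Sₙ`, so `sign f = -1` since `n!` is even. Write
`f = ρ * (· * a)`: the permutation `ρ` fixes every vertex `v` for which `v * a⁻¹` leaves by an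
`a`-step and sends the others to `v * (a⁻¹ * b)`. As `f` is injective, the second kind of vertex is
closed under right multiplication by `a⁻¹ * b`, an `(n - 1)`-cycle, so `ρ ^ (n - 1) = 1` and, `n - 1`
being odd, `sign ρ = 1`. Right multiplication by the fixed-point-free involution `a` is a product
of `n! / 2` transpositions, an even number for `n ≥ 4`. Hence `sign f = 1`, a contradiction.
-/

open Equiv.Perm

theorem Equiv.Perm.sign_eq_one_of_pow_eq_one_of_odd {α : Type*} [DecidableEq α] [Fintype α]
    {σ : Perm α} {k : ℕ} (hσ : σ ^ k = 1) (hk : Odd k) : sign σ = 1 := by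
  have h := congrArg sign hσ
  rw [map_pow, map_one] at h
  rcases Int.units_eq_one_or (sign σ) with h1 | h1
  · exact h1
  · rw [h1, hk.neg_one_pow] at h
    exact absurd h (by decide)

theorem Equiv.Perm.sign_mulRight_of_sq_eq_one {G : Type*} [Group G] [Fintype G] [DecidableEq G]
    {g : G} (hg : g ^ 2 = 1) (hg1 : g ≠ 1) :
    sign (Equiv.mulRight g) = (-1) ^ (Fintype.card G / 2) := by
  rw [sign_of_pow_two_eq_one (by rw [pow_mulRight, hg, mulRight_one])]
  have : IsEmpty (Function.fixedPoints (Equiv.mulRight g)) :=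
    ⟨fun ⟨v, hv⟩ => hg1 (by simpa [Function.IsFixedPt] using hv)⟩
  rw [Fintype.card_eq_zero (α := Function.fixedPoints (Equiv.mulRight g)), Nat.sub_zero]

theorem Equiv.Perm.sign_eq_sign_mulRight_of_forall_eq_mul_or_eq_mul
    {G : Type*} [Group G] [Fintype G] [DecidableEq G] {a b : G} {k : ℕ}
    (hk : Odd k) (hab : (a⁻¹ * b) ^ k = 1) {f : Perm G} (hf : ∀ v, f v = v * a ∨ f v = v * b) :
    sign f = sign (Equiv.mulRight a) := by
  set ρ := f * (Equiv.mulRight a)⁻¹ with hρ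
  have hρ_apply : ∀ v, ρ v = f (v * a⁻¹) := fun v => by simp [hρ]
  have hρ_moved : ∀ v, ρ v ≠ v → ρ v = v * (a⁻¹ * b) := by
    intro v hv
    rcases hf (v * a⁻¹) with h | h
    · exact absurd (by rw [hρ_apply, h, inv_mul_cancel_right]) hv
    · rw [hρ_apply, h, mul_assoc]
  have hmoved_mul : ∀ v, ρ v ≠ v → ρ (v * (a⁻¹ * b)) ≠ v * (a⁻¹ * b) := by
    intro v hv hfix
    have : ρ (v * (a⁻¹ * b)) = ρ v := by rw [hfix, hρ_moved v hv]
    exact hv (by rw [hρ_moved v hv, ρ.injective this])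
  have hpow : ∀ j v, ρ v ≠ v → (ρ ^ j) v = v * (a⁻¹ * b) ^ j := by
    intro j
    induction j with
    | zero => simp
    | succ j ih =>
      intro v hv
      rw [pow_succ, mul_apply, hρ_moved v hv, ih _ (hmoved_mul v hv), mul_assoc, ← pow_succ']
  have hρk : ρ ^ k = 1 := by
    ext v
    by_cases hv : ρ v = v
    · exact pow_apply_eq_self_of_apply_eq_self hv k
    · rw [hpow k v hv, hab, mul_one, one_apply]
  have hf_eq : f = ρ * Equiv.mulRight a := by rw [hρ, inv_mul_cancel_right]
  rw [hf_eq, map_mul, sign_eq_one_of_pow_eq_one_of_odd hρk hk, one_mul]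

theorem partialProd_zero (n : ℕ) (S : List ℕ) : partialProd n S 0 = 1 := by
  simp [partialProd]

theorem partialProd_succ (n : ℕ) {S : List ℕ} {i : ℕ} (hi : i < S.length) :
    partialProd n S (i + 1) = partialProd n S i * sigmaRot n S[i] := by
  rw [partialProd, partialProd, List.take_add_one, List.getElem?_eq_getElem hi, List.map_append,
    List.prod_append]
  simp

theorem IsHamiltonSeq.exists_perm_sign_eq_sign_finRotate {n : ℕ} {R : Set ℕ} {S : List ℕ}
    (hS : IsHamiltonSeq n R S) :
    ∃ f : Perm (Perm (Fin n)), sign f = sign (finRotate n.factorial) ∧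
      ∀ v, ∃ r ∈ R, f v = v * sigmaRot n r := by
  obtain ⟨hlen, hR, hinj, hprod⟩ := hS
  obtain ⟨M, hM⟩ : ∃ M, n.factorial = M + 1 := ⟨_, (Nat.succ_pred_eq_of_pos n.factorial_pos).symm⟩
  let p : Fin (M + 1) → Perm (Fin n) := fun i => partialProd n S i
  have hp : Function.Bijective p :=
    (Fintype.bijective_iff_injective_and_card p).2
      ⟨fun i j h => Fin.ext (hinj _ (by omega) _ (by omega) h),
        by rw [Fintype.card_fin, Fintype.card_perm, Fintype.card_fin, hM]⟩
  let E := Equiv.ofBijective p hp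
  refine ⟨E.permCongr (finRotate (M + 1)), by rw [sign_permCongr, hM], fun v => ?_⟩
  obtain ⟨i, rfl⟩ := E.surjective v
  have hi : (i : ℕ) < S.length := by omega
  refine ⟨S[(i : ℕ)], hR _ (List.getElem_mem hi), ?_⟩
  rw [permCongr_apply, symm_apply_apply]
  change partialProd n S (finRotate (M + 1) i) = partialProd n S i * sigmaRot n S[(i : ℕ)]
  rw [← partialProd_succ n hi, coe_finRotate]
  split_ifs with h
  · rw [partialProd_zero, h, Fin.val_last, ← hM, ← hlen, hprod]
  · rfl

theorem finRotate_pow_self (n : ℕ) : finRotate n ^ n = 1 := by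
  rcases n with _ | _ | n
  · rfl
  · rw [pow_one, finRotate_one]; rfl
  · have h := pow_orderOf_eq_one (finRotate (n + 2))
    rwa [isCycle_finRotate.orderOf, support_finRotate, Finset.card_univ, Fintype.card_fin] at h

theorem Equiv.Perm.swap_mul_decomposeFin_symm {n : ℕ} (p : Fin (n + 1)) (e : Perm (Fin n)) :
    swap 0 p * decomposeFin.symm (p, e) = decomposeFin.symm (0, e) := by
  ext x
  refine Fin.cases ?_ (fun x => ?_) x <;> simp

theorem Equiv.Perm.decomposeFin_symm_zero_pow {n : ℕ} (e : Perm (Fin n)) (k : ℕ) :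
    decomposeFin.symm (0, e) ^ k = decomposeFin.symm (0, e ^ k) := by
  induction k with
  | zero => rw [pow_zero, pow_zero, decomposeFin_symm_of_one, swap_self]; rfl
  | succ k ih =>
    ext x
    refine Fin.cases ?_ (fun x => ?_) x <;> simp [pow_succ, ih]

theorem sigmaRot_two (m : ℕ) : sigmaRot (m + 2) 2 = swap 0 1 := by
  rw [sigmaRot, dif_pos (by omega)]
  refine Equiv.ext fun x => ?_
  rcases x with ⟨_ | _ | x, hx⟩
  · rw [Fin.cycleRange_of_lt (by simp), Fin.mk_zero, swap_apply_left, zero_add]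
  · rw [Fin.cycleRange_of_eq rfl, Fin.mk_one, swap_apply_right]
  · rw [Fin.cycleRange_of_gt (by simp [Fin.lt_def]), swap_apply_of_ne_of_ne] <;>
      simp [Fin.ext_iff]

theorem sigmaRot_self (n : ℕ) : sigmaRot (n + 1) (n + 1) = finRotate (n + 1) := by
  rw [sigmaRot, dif_pos (by omega), ← Fin.cycleRange_last]
  rfl

theorem swap_zero_one_mul_finRotate_pow (m : ℕ) :
    (swap 0 1 * finRotate (m + 2)) ^ (m + 1) = 1 := by
  rw [finRotate_succ_eq_decomposeFin, swap_mul_decomposeFin_symm, decomposeFin_symm_zero_pow,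
    finRotate_pow_self, decomposeFin_symm_of_one, swap_self]
  rfl

/-- Rankin, Swan. For every even `n ≥ 4`, the restricted rotator graph
`RR_n({2,n})` has no Hamilton cycle, i.e. there is no Hamilton sequence for `RR_n({2,n})`. -/
theorem stmt1 (n : ℕ) (hn : 4 ≤ n) (hEven : Even n) :
    ¬ ∃ S : List ℕ, IsHamiltonSeq n {2, n} S := by
  obtain ⟨m, rfl⟩ : ∃ m, n = m + 2 := ⟨n - 2, by omega⟩
  rintro ⟨S, hS⟩
  obtain ⟨f, hf_sign, hf⟩ := hS.exists_perm_sign_eq_sign_finRotate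
  have hf_step : ∀ v, f v = v * swap 0 1 ∨ f v = v * finRotate (m + 2) := by
    intro v
    obtain ⟨r, hr | hr, hfv⟩ := hf v
    · exact Or.inl (by rw [hfv, hr, sigmaRot_two])
    · exact Or.inr (by rw [hfv, Set.mem_singleton_iff.mp hr, sigmaRot_self])
  have h_odd : Odd (m + 1) := by
    obtain ⟨t, ht⟩ := hEven
    exact ⟨t - 1, by omega⟩
  have h_sign := sign_eq_sign_mulRight_of_forall_eq_mul_or_eq_mul h_odd
    (by rw [swap_inv]; exact swap_zero_one_mul_finRotate_pow m) hf_step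
  rw [hf_sign, sign_finRotate, sign_mulRight_of_sq_eq_one (by rw [sq, swap_mul_self])
    (by simp [swap_eq_one_iff]), Fintype.card_perm, Fintype.card_fin] at h_sign
  obtain ⟨t, ht⟩ : 4 ∣ (m + 2).factorial := Nat.dvd_factorial (by norm_num) hn
  have h_pos := (m + 2).factorial_pos
  rw [Odd.neg_one_pow ⟨2 * t - 1, by omega⟩, Even.neg_one_pow ⟨t, by omega⟩] at h_sign
  exact absurd h_sign (by decide)
end

section
/- Let n ≥ 4 and let m ∈ {2,3,…,n−2}. Then the restricted incomplete rotator graph RIR_n({n−1,n},m) is not strongly connected. In particular, there is no directed path in this graph from any node whose first four symbols are n, n−2, n−1, n−3 to any node whose first two symbols are n, n−1. -/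
/-!
Let `p(t)` be the (0-indexed) position of the symbol `t` in a string. Along an arc of
`RIR_n({n-1,n},m)` with `m ≤ n - 2`, neither of the two largest symbols can sit in the last
position, so both `σ_{n-1}` and `σ_n` move each of them one step to the left, cyclically on the
first `n - 1` positions. Hence `p(n-1) - p(n) mod (n-1)` (see `posMod`) is invariant along
directed paths; it is `2` at the source nodes and `1` at the target nodes, which differ since
`n - 1 ≥ 3`.
-/

open Equiv

theorem sigmaRot_val_cast_of_ne {n r : ℕ} (hr : r = n - 1 ∨ r = n) {q : Fin n}
    (hq : (q : ℕ) ≠ n - 1) :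
    ((sigmaRot n r q : ℕ) : ZMod (n - 1)) = q + 1 := by
  have hq' := q.isLt
  rw [sigmaRot, dif_pos (by omega)]
  rcases Nat.lt_or_ge (q : ℕ) (r - 1) with hlt | hge
  · rw [Fin.coe_cycleRange_of_lt (Fin.mk_lt_mk.mpr hlt), Nat.cast_succ]
  · -- `q` is the last rotated position, which happens only for `r = n - 1`, and `0 ≡ n - 1`.
    have hqr : q = ⟨r - 1, by omega⟩ := Fin.ext (show (q : ℕ) = r - 1 by omega)
    rw [Fin.coe_cycleRange_of_le hqr.le, if_pos hqr, Nat.cast_zero, ← Nat.cast_add_one,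
      show (q : ℕ) + 1 = n - 1 by omega, ZMod.natCast_self]

theorem ZMod.natCast_ne_natCast_of_lt {c i j : ℕ} (hi : i < c) (hj : j < c) (hij : i ≠ j) :
    (i : ZMod c) ≠ j := by
  rwa [Ne, ZMod.natCast_eq_natCast_iff', Nat.mod_eq_of_lt hi, Nat.mod_eq_of_lt hj]

section PositionMod

variable {n : ℕ}

def posMod (a : Perm (Fin n)) (t : Fin n) : ZMod (n - 1) := ((a⁻¹ t : ℕ) : ZMod (n - 1))

theorem posMod_eq_of_apply {a : Perm (Fin n)} {p t : Fin n} (h : (a p : ℕ) = t) :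
    posMod a t = p := by
  rw [posMod, (Perm.inv_eq_iff_eq).mpr (Fin.ext h).symm]

theorem posMod_eq_posMod_mul_sigmaRot_add_one {r : ℕ} (hr : r = n - 1 ∨ r = n)
    (a : Perm (Fin n)) {t : Fin n} (ht : lastVal (a * sigmaRot n r) ≠ t) :
    posMod a t = posMod (a * sigmaRot n r) t + 1 := by
  set q := (a * sigmaRot n r)⁻¹ t with hq
  have hbq : (a * sigmaRot n r) q = t := Perm.eq_inv_iff_eq.mp hq
  have hq_last : (q : ℕ) ≠ n - 1 := by
    intro h
    refine ht ?_
    rw [lastVal, dif_pos (by omega), show (⟨n - 1, _⟩ : Fin n) = q from Fin.ext h.symm, hbq]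
  have haq : a⁻¹ t = sigmaRot n r q := Perm.inv_eq_iff_eq.mpr hbq.symm
  rw [posMod, posMod, haq, sigmaRot_val_cast_of_ne hr hq_last]

variable {m : ℕ}

theorem RIRAdj.posMod_eq_add_one {a b : Perm (Fin n)} (hab : RIRAdj n m {n - 1, n} a b)
    {t : Fin n} (ht : m ≤ t) : posMod a t = posMod b t + 1 := by
  obtain ⟨-, hb, r, hr, rfl⟩ := hab
  exact posMod_eq_posMod_mul_sigmaRot_add_one hr a (by omega)

theorem posMod_sub_eq_of_reflTransGen {a b : Perm (Fin n)}
    (hab : Relation.ReflTransGen (RIRAdj n m {n - 1, n}) a b) {t u : Fin n}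
    (ht : m ≤ t) (hu : m ≤ u) : posMod b t - posMod b u = posMod a t - posMod a u := by
  induction hab with
  | refl => rfl
  | tail _ hbc ih =>
    rw [← ih, hbc.posMod_eq_add_one ht, hbc.posMod_eq_add_one hu, add_sub_add_right_eq_sub]

theorem not_reflTransGen_RIRAdj_of_apply {a b : Perm (Fin n)} {p₁ p₂ q₁ q₂ t u : Fin n}
    (ht : m ≤ t) (hu : m ≤ u) (ha₁ : (a p₁ : ℕ) = t) (ha₂ : (a p₂ : ℕ) = u)
    (hb₁ : (b q₁ : ℕ) = t) (hb₂ : (b q₂ : ℕ) = u)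
    (hpq : ((p₁ : ℕ) : ZMod (n - 1)) - p₂ ≠ q₁ - q₂) :
    ¬ Relation.ReflTransGen (RIRAdj n m {n - 1, n}) a b := fun hab => hpq <| by
  rw [← posMod_eq_of_apply ha₁, ← posMod_eq_of_apply ha₂, ← posMod_eq_of_apply hb₁,
    ← posMod_eq_of_apply hb₂]
  exact (posMod_sub_eq_of_reflTransGen hab ht hu).symm

end PositionMod

/-- For `n ≥ 4` and `m ∈ {2,…,n-2}`, the restricted incomplete rotator graph
`RIR_n({n-1,n},m)` is not strongly connected; in particular there is no directed path from any
node whose first four symbols are `n, n-2, n-1, n-3` to any node whose first two symbols are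
`n, n-1` (symbols `1,…,n` are represented by the `Fin n` values `0,…,n-1`). -/
theorem stmt2 (n m : ℕ) (hn : 4 ≤ n) (hm2 : 2 ≤ m) (hm : m ≤ n - 2) :
    ¬ StronglyConnectedRIR n m {n - 1, n} ∧
    ∀ a b : Equiv.Perm (Fin n),
      lastVal a < m → lastVal b < m →
      ((a ⟨0, by omega⟩ : Fin n) : ℕ) = n - 1 →
      ((a ⟨1, by omega⟩ : Fin n) : ℕ) = n - 3 →
      ((a ⟨2, by omega⟩ : Fin n) : ℕ) = n - 2 →
      ((a ⟨3, by omega⟩ : Fin n) : ℕ) = n - 4 →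
      ((b ⟨0, by omega⟩ : Fin n) : ℕ) = n - 1 →
      ((b ⟨1, by omega⟩ : Fin n) : ℕ) = n - 2 →
      ¬ Relation.ReflTransGen (RIRAdj n m {n - 1, n}) a b := by
  have no_path : ∀ a b : Perm (Fin n), ((a ⟨0, by omega⟩ : Fin n) : ℕ) = n - 1 →
      ((a ⟨2, by omega⟩ : Fin n) : ℕ) = n - 2 → ((b ⟨0, by omega⟩ : Fin n) : ℕ) = n - 1 →
      ((b ⟨1, by omega⟩ : Fin n) : ℕ) = n - 2 →
      ¬ Relation.ReflTransGen (RIRAdj n m {n - 1, n}) a b := by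
    intro a b ha0 ha2 hb0 hb1
    refine not_reflTransGen_RIRAdj_of_apply (t := ⟨n - 2, by omega⟩) (u := ⟨n - 1, by omega⟩)
      hm (by simp only; omega) ha2 ha0 hb1 hb0 ?_
    simpa using ZMod.natCast_ne_natCast_of_lt (c := n - 1) (i := 2) (j := 1) (by omega) (by omega)
      (by omega)
  refine ⟨fun hSC => ?_, fun a b _ _ ha0 _ ha2 _ hb0 hb1 => no_path a b ha0 ha2 hb0 hb1⟩
  -- In one-line notation `a = n (n-2) (n-1) (n-3) ⋯ 1` and `Fin.revPerm = n (n-1) ⋯ 1`.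
  set a : Perm (Fin n) := Fin.revPerm * swap ⟨1, by omega⟩ ⟨2, by omega⟩
  have last_lt : ∀ c : Perm (Fin n), c ⟨n - 1, by omega⟩ = Fin.revPerm ⟨n - 1, by omega⟩ →
      lastVal c < m := by
    intro c hc
    rw [lastVal, dif_pos (by omega), hc]
    simp only [Fin.revPerm_apply, Fin.val_rev]
    omega
  have ha_last : lastVal a < m := last_lt a <| by
    simp only [a, Perm.mul_apply]
    rw [swap_apply_of_ne_of_ne] <;> simp only [ne_eq, Fin.ext_iff] <;> omega
  refine no_path a Fin.revPerm ?_ ?_ ?_ ?_ (hSC _ _ ha_last (last_lt _ rfl))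
  all_goals simp [a, Fin.revPerm_apply, swap_apply_def, Fin.ext_iff]
end

section
/- Let n ≥ 3, let m ∈ {2,3,…,n−1}, and let R = {2,3,…,n−m} ∪ {n}. Then the restricted incomplete rotator graph RIR_n(R,m) is not strongly connected. In particular, there is no arc from any node whose last m symbols are 1 2 ⋯ m (in that order) to any node outside this set of strings. -/
open Equiv

/-! A node whose last `m` symbols are `1 2 ⋯ m` keeps that suffix under `σ_r` for `r ≤ n - m`,
since `σ_r` only moves the first `r` positions. Under `σ_n` the first symbol moves to the end;
it is not one of `1, …, m` (those sit in the suffix), so the image is not a node of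
`RIR_n(R, m)`. Hence the nodes with suffix `1 2 ⋯ m` form a closed set, and for `m ≥ 2` it
misses some node, e.g. one ending in `1`. -/

/-- The last `m` symbols of the string `a` are `1 2 ⋯ m` (symbols are 0-indexed). -/
def HasIdentitySuffix (n m : ℕ) (a : Perm (Fin n)) : Prop :=
  ∀ i : Fin n, n - m ≤ (i : ℕ) → (a i : ℕ) = i - (n - m)

theorem hasIdentitySuffix_iff {n m : ℕ} (hm : m ≤ n) {a : Perm (Fin n)} :
    HasIdentitySuffix n m a ↔ ∀ j : ℕ, ∀ hj : j < m, ((a ⟨n - m + j, by omega⟩ : Fin n) : ℕ) = j := by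
  constructor
  · intro h j hj
    exact (h _ (Nat.le_add_right _ _)).trans (Nat.add_sub_cancel_left ..)
  · intro h i hi
    have := h (i - (n - m)) (by omega)
    rwa [show (⟨n - m + (i - (n - m)), _⟩ : Fin n) = i from Fin.ext (show n - m + (i - (n - m)) = i by omega)] at this

theorem lastVal_eq_val_apply {n : ℕ} (a : Perm (Fin n)) (i : Fin n) (hi : (i : ℕ) = n - 1) :
    lastVal a = a i := by
  obtain ⟨i, hin⟩ := i
  simp only at hi
  subst hi
  rw [lastVal, dif_pos (by omega : 0 < n)]

theorem sigmaRot_apply_of_le {n r : ℕ} {i : Fin n} (h : r ≤ i) : sigmaRot n r i = i := by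
  unfold sigmaRot
  split_ifs with hr
  · rcases Nat.eq_zero_or_pos r with rfl | hr0
    · have : NeZero n := ⟨by omega⟩
      rw [show (⟨0 - 1, hr⟩ : Fin n) = 0 from rfl, Fin.cycleRange_zero, Perm.one_apply]
    · exact Fin.cycleRange_of_gt (Fin.mk_lt_mk.2 (by omega))
  · rfl

theorem lastVal_mul_sigmaRot_self {n : ℕ} (hn : 0 < n) (a : Perm (Fin n)) :
    lastVal (a * sigmaRot n n) = (a ⟨0, hn⟩ : ℕ) := by
  have : NeZero n := ⟨by omega⟩
  rw [lastVal_eq_val_apply _ ⟨n - 1, by omega⟩ rfl, sigmaRot, dif_pos (by omega), Perm.mul_apply,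
    Fin.cycleRange_of_eq rfl]
  rfl

namespace HasIdentitySuffix

variable {n m : ℕ} {a : Perm (Fin n)}

theorem mul_sigmaRot (ha : HasIdentitySuffix n m a) {r : ℕ} (hr : r ≤ n - m) :
    HasIdentitySuffix n m (a * sigmaRot n r) := by
  intro i hi
  rw [Perm.mul_apply, sigmaRot_apply_of_le (by omega)]
  exact ha i hi

theorem le_lastVal_mul_sigmaRot_self (ha : HasIdentitySuffix n m a) (hm : m < n) :
    m ≤ lastVal (a * sigmaRot n n) := by
  rw [lastVal_mul_sigmaRot_self (by omega)]
  by_contra! hlt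
  set v : ℕ := (a ⟨0, by omega⟩ : ℕ)
  -- the value `v < m` also sits at position `n - m + v > 0`
  have hv : a ⟨n - m + v, by omega⟩ = a ⟨0, by omega⟩ :=
    Fin.ext ((ha _ (Nat.le_add_right _ _)).trans (Nat.add_sub_cancel_left ..))
  have : n - m + v = 0 := congrArg Fin.val (a.injective hv)
  omega

theorem of_rirAdj {R : Set ℕ} (hR : ∀ r ∈ R, r ≤ n - m ∨ r = n) (hm : m < n)
    (ha : HasIdentitySuffix n m a) {b : Perm (Fin n)} (hab : RIRAdj n m R a b) :
    HasIdentitySuffix n m b := by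
  obtain ⟨-, hb, r, hrR, rfl⟩ := hab
  rcases hR r hrR with hr | rfl
  · exact ha.mul_sigmaRot hr
  · exact absurd hb (not_lt.2 (ha.le_lastVal_mul_sigmaRot_self hm))

theorem of_reflTransGen {R : Set ℕ} (hR : ∀ r ∈ R, r ≤ n - m ∨ r = n) (hm : m < n)
    (ha : HasIdentitySuffix n m a) {b : Perm (Fin n)}
    (hab : Relation.ReflTransGen (RIRAdj n m R) a b) : HasIdentitySuffix n m b := by
  induction hab with
  | refl => exact ha
  | tail _ hbc ih => exact ih.of_rirAdj hR hm hbc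

end HasIdentitySuffix

theorem hasIdentitySuffix_addRight {n m : ℕ} [NeZero n] (hm : m < n) :
    HasIdentitySuffix n m (Equiv.addRight (Fin.ofNat n m)) := by
  intro i hi
  rw [coe_addRight, Fin.val_add, Fin.val_ofNat, Nat.mod_eq_of_lt hm,
    Nat.mod_eq_sub_mod (by omega), Nat.mod_eq_of_lt (by omega)]
  omega

theorem not_stronglyConnectedRIR {n m : ℕ} {R : Set ℕ} (hR : ∀ r ∈ R, r ≤ n - m ∨ r = n)
    (hm2 : 2 ≤ m) (hm : m < n) : ¬ StronglyConnectedRIR n m R := by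
  intro hsc
  have : NeZero n := ⟨by omega⟩
  set a : Perm (Fin n) := Equiv.addRight (Fin.ofNat n m)
  set b : Perm (Fin n) := swap ⟨0, by omega⟩ ⟨n - 1, by omega⟩
  have ha : HasIdentitySuffix n m a := hasIdentitySuffix_addRight hm
  have hla : lastVal a < m := by
    rw [lastVal_eq_val_apply a ⟨n - 1, by omega⟩ rfl, ha _ (show n - m ≤ n - 1 by omega)]
    show n - 1 - (n - m) < m
    omega
  have hlb : lastVal b < m := by
    rw [lastVal_eq_val_apply b ⟨n - 1, by omega⟩ rfl, swap_apply_right]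
    show 0 < m
    omega
  have hb := ha.of_reflTransGen hR hm (hsc a b hla hlb) ⟨n - m, by omega⟩ le_rfl
  rw [swap_apply_of_ne_of_ne (Fin.ne_of_val_ne (show n - m ≠ 0 by omega))
    (Fin.ne_of_val_ne (show n - m ≠ n - 1 by omega))] at hb
  have : n - m = n - m - (n - m) := hb
  omega

/-- For `n ≥ 3`, `m ∈ {2,…,n-1}` and `R = {2,…,n-m} ∪ {n}`, the restricted
incomplete rotator graph `RIR_n(R,m)` is not strongly connected; in particular there is no arc
from any node whose last `m` symbols are `1 2 ⋯ m` (in that order) to any node outside this set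
of strings (symbol `j+1` is represented by the `Fin n` value `j`). -/
theorem stmt3 (n m : ℕ) (hm2 : 2 ≤ m) (hm : m ≤ n - 1) :
    ¬ StronglyConnectedRIR n m ({r | 2 ≤ r ∧ r ≤ n - m} ∪ {n}) ∧
    ∀ a b : Equiv.Perm (Fin n),
      (∀ j : ℕ, ∀ hj : j < m, ((a ⟨n - m + j, by omega⟩ : Fin n) : ℕ) = j) →
      ¬ (∀ j : ℕ, ∀ hj : j < m, ((b ⟨n - m + j, by omega⟩ : Fin n) : ℕ) = j) →
      ¬ RIRAdj n m ({r | 2 ≤ r ∧ r ≤ n - m} ∪ {n}) a b := by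
  have hR : ∀ r ∈ ({r | 2 ≤ r ∧ r ≤ n - m} ∪ {n} : Set ℕ), r ≤ n - m ∨ r = n :=
    fun _ hr => hr.imp And.right id
  refine ⟨not_stronglyConnectedRIR hR hm2 (by omega), fun a b ha hb hab => hb ?_⟩
  rw [← hasIdentitySuffix_iff (by omega)] at ha ⊢
  exact ha.of_rirAdj hR (by omega) hab
end

section
/- Let n ≥ 3, let S = r₁,…,r_k be a sequence with every entry in {2,…,n−1}, and let a be any permutation of {1,…,n} written as a string. Then the set of the first n·k strings visited along the path obtained by applying the rotations of reuse_n(S) successively to a (that is, the strings a·σ_{s₁}⋯σ_{s_i} for i = 0,1,…,nk−1, where s₁,…,s_{nk} = reuse_n(S)) is closed under right multiplication by σ_n: if b lies in this set then so does b·σ_n^i for every 1 ≤ i ≤ n−1. -/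
open Equiv

private lemma stmt5.sigma_pow (n : ℕ) (hn : 2 ≤ n) : (sigmaRot n n) ^ n = 1 := by
  obtain ⟨m, rfl⟩ : ∃ m, n = m + 1 := ⟨n - 1, by omega⟩
  have h : sigmaRot (m + 1) (m + 1) = finRotate (m + 1) := by
    rw [sigmaRot, dif_pos (by omega)]
    have : (⟨m + 1 - 1, by omega⟩ : Fin (m + 1)) = Fin.last m := rfl
    rw [this, Fin.cycleRange_last]
  have ho : orderOf (finRotate (m + 1)) = m + 1 := by
    rw [(isCycle_finRotate_of_le hn).orderOf, support_finRotate_of_le hn]; simp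
  have hp := pow_orderOf_eq_one (finRotate (m + 1))
  rw [ho] at hp
  rw [h]; exact hp

private lemma stmt5.block_prefix (n : ℕ) (hn : 2 ≤ n) (r : ℕ) (S : List ℕ) (i : ℕ)
    (hi : i ≤ n - 1) :
    partialProd n (reuseOp n (r :: S)) i = (sigmaRot n n) ^ i := by
  have h1 : reuseOp n (r :: S) =
      (List.replicate (n - 1) n ++ [n + 1 - r]) ++ reuseOp n S := by
    simp [reuseOp]
  rw [partialProd, h1, List.append_assoc,
    List.take_append_of_le_length (by simpa using by omega : i ≤ (List.replicate (n-1) n).length),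
    List.take_replicate, min_eq_left hi, List.map_replicate, List.prod_replicate]

private lemma stmt5.block_add (n : ℕ) (hn : 2 ≤ n) (r : ℕ) (S : List ℕ) (i : ℕ) :
    partialProd n (reuseOp n (r :: S)) (n + i) =
      ((List.replicate (n - 1) n ++ [n + 1 - r]).map (sigmaRot n)).prod *
        partialProd n (reuseOp n S) i := by
  have h1 : reuseOp n (r :: S) =
      (List.replicate (n - 1) n ++ [n + 1 - r]) ++ reuseOp n S := by
    simp [reuseOp]
  have hlen : (List.replicate (n - 1) n ++ [n + 1 - r]).length = n := by simp; omega
  rw [partialProd, h1, List.take_append,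
    List.take_of_length_le (by rw [hlen]; omega), hlen, Nat.add_sub_cancel_left]
  simp [partialProd, mul_assoc]

private lemma stmt5.key (n : ℕ) (hn : 3 ≤ n) (S : List ℕ) :
    ∀ i < n * S.length, ∀ j : ℕ, ∃ i' < n * S.length,
      partialProd n (reuseOp n S) i * (sigmaRot n n) ^ j =
        partialProd n (reuseOp n S) i' := by
  induction S with
  | nil => intro i hi; simp at hi
  | cons r S ih =>
    intro i hi j
    rcases lt_or_ge i n with h | h
    · refine ⟨(i + j) % n, ?_, ?_⟩
      · have := Nat.mod_lt (i + j) (show 0 < n by omega)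
        have : n * (r :: S).length = n * S.length + n := by
          simp [Nat.mul_succ]
        omega
      · rw [stmt5.block_prefix n (by omega) r S i (by omega),
          stmt5.block_prefix n (by omega) r S _ (by
            have := Nat.mod_lt (i + j) (show 0 < n by omega); omega),
          ← pow_add, pow_eq_pow_mod (i + j) (stmt5.sigma_pow n (by omega))]
    · obtain ⟨i0, rfl⟩ : ∃ i0, i = n + i0 := ⟨i - n, by omega⟩
      have hmul : n * (r :: S).length = n * S.length + n := by simp [Nat.mul_succ]
      have hi0 : i0 < n * S.length := by omega
      obtain ⟨i', hi', heq⟩ := ih i0 hi0 j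
      exact ⟨n + i', by omega,
        by rw [stmt5.block_add n (by omega), stmt5.block_add n (by omega),
          mul_assoc, heq]⟩

/-- For `n ≥ 3`, a sequence `S` with entries in `{2,…,n-1}` and any string `a`,
the set of the first `n·|S|` strings visited along `reuse_n(S)` starting from `a` is closed
under right multiplication by powers `σ_n^i`, `1 ≤ i ≤ n-1`. -/
theorem stmt5 (n : ℕ) (hn : 3 ≤ n) (S : List ℕ) (hS : ∀ r ∈ S, 2 ≤ r ∧ r ≤ n - 1)
    (a : Equiv.Perm (Fin n)) :
    ∀ b ∈ {c : Equiv.Perm (Fin n) |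
        ∃ i < n * S.length, c = a * partialProd n (reuseOp n S) i},
      ∀ i : ℕ, 1 ≤ i → i ≤ n - 1 →
        b * (sigmaRot n n) ^ i ∈ {c : Equiv.Perm (Fin n) |
          ∃ i < n * S.length, c = a * partialProd n (reuseOp n S) i} := by
  rintro b ⟨i, hi, rfl⟩ j hj1 hj2
  obtain ⟨i', hi', heq⟩ := stmt5.key n hn S i hi j
  exact ⟨i', hi', by rw [mul_assoc, heq]⟩
end

section
/- Let n ≥ 3 and r ∈ {2,3,…,n−1}. Then σ_n² · σ_{n−1}^{r−1} · σ_n^{n−r−1} = σ'_r, where σ'_r = (2 3 ⋯ r+1) is the modified prefix-rotation and the product is composed left-to-right. Equivalently, for every string a of length n, applying σ_n twice, then σ_{n−1} a total of r−1 times, then σ_n a total of n−r−1 times, yields a·σ'_r. -/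
open Equiv

/-- The modified prefix-rotation `σ'_r = (2 3 ⋯ r+1)` of positions; it is the conjugate of the
prefix-rotation `σ_r` by `σ_n`. -/
def primRot (n r : ℕ) : Equiv.Perm (Fin n) :=
  sigmaRot n n * sigmaRot n r * (sigmaRot n n)⁻¹

lemma cycleRange_pow_apply_of_gt {n : ℕ} (i x : Fin (n+1)) (h : i < x) (k : ℕ) :
    (Fin.cycleRange i ^ k) x = x := by
  induction k with
  | zero => rfl
  | succ k ih => rw [pow_succ', Equiv.Perm.mul_apply, ih, Fin.cycleRange_of_gt h]

lemma cycleRange_pow_apply {n : ℕ} (i : Fin (n+1)) (k : ℕ) (x : Fin (n+1)) (hx : x ≤ i) :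
    (((Fin.cycleRange i) ^ k) x : ℕ) = ((x : ℕ) + k) % ((i : ℕ) + 1) := by
  induction k with
  | zero =>
    simp only [pow_zero, Equiv.Perm.one_apply, Nat.add_zero]
    have hx' : (x : ℕ) ≤ (i : ℕ) := hx
    exact (Nat.mod_eq_of_lt (by omega)).symm
  | succ k ih =>
    rw [pow_succ', Equiv.Perm.mul_apply]
    set y := (Fin.cycleRange i ^ k) x with hy
    have hyle : y ≤ i := by
      rw [Fin.le_def, ih]
      have := Nat.mod_lt ((x : ℕ) + k) (show 0 < (i:ℕ)+1 by omega)
      omega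
    rw [Fin.coe_cycleRange_of_le hyle]
    have hdm := Nat.div_add_mod ((x : ℕ) + k) ((i : ℕ) + 1)
    by_cases h : y = i
    · rw [if_pos h]
      have hs : ((x:ℕ)+k) % ((i:ℕ)+1) = (i:ℕ) := by rw [← ih, h]
      have h1 : (x:ℕ)+(k+1) = ((i:ℕ)+1) * (((x:ℕ)+k)/((i:ℕ)+1) + 1) := by
        rw [Nat.mul_add, Nat.mul_one]; omega
      rw [h1, Nat.mul_mod_right]
    · rw [if_neg h]
      have hlt : (y:ℕ) < (i:ℕ) := Fin.lt_def.mp (lt_of_le_of_ne hyle h)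
      have hs : ((x:ℕ)+k) % ((i:ℕ)+1) < (i:ℕ) := by omega
      have h1 : (x:ℕ)+(k+1) =
          (((x:ℕ)+k) % ((i:ℕ)+1) + 1) + ((i:ℕ)+1) * (((x:ℕ)+k)/((i:ℕ)+1)) := by omega
      rw [h1, Nat.add_mul_mod_self_left, Nat.mod_eq_of_lt (by omega)]
      omega

lemma keyLemma (m r : ℕ) (hm : 2 ≤ m) (hr2 : 2 ≤ r) (hr : r ≤ m) :
    Fin.cycleRange (Fin.last m) * (Fin.cycleRange (⟨m-1, by omega⟩ : Fin (m+1))) ^ (r-1)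
      * Fin.cycleRange (Fin.last m) ^ (m+1-r)
      = Fin.cycleRange (⟨r-1, by omega⟩ : Fin (m+1)) := by
  ext x
  simp only [Equiv.Perm.mul_apply]
  set c := Fin.cycleRange (Fin.last m) with hc
  set d := Fin.cycleRange (⟨m-1, by omega⟩ : Fin (m+1)) with hd
  have hx : (x:ℕ) < m + 1 := x.isLt
  set y := (c ^ (m+1-r)) x with hy
  have hyv : (y : ℕ) = ((x:ℕ) + (m+1-r)) % (m+1) := by
    have h := cycleRange_pow_apply (Fin.last m) (m+1-r) x (Fin.le_last x)
    rw [Fin.val_last] at h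
    exact h
  rcases lt_trichotomy ((x:ℕ)) (r-1) with hcase | hcase | hcase
  · -- x < r - 1
    have hyv' : (y : ℕ) = (x:ℕ) + (m+1-r) := by
      rw [hyv, Nat.mod_eq_of_lt (by omega)]
    have hyle : y ≤ (⟨m-1, by omega⟩ : Fin (m+1)) := by
      rw [Fin.le_def]; show (y:ℕ) ≤ m - 1; omega
    have hzv : ((d ^ (r-1)) y : ℕ) = (x:ℕ) := by
      rw [hd, cycleRange_pow_apply _ _ _ hyle]
      show ((y:ℕ) + (r-1)) % (m-1+1) = (x:ℕ)
      rw [show (y:ℕ) + (r-1) = (x:ℕ) + (m-1+1) by omega, Nat.add_mod_right,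
        Nat.mod_eq_of_lt (by omega)]
    have hz : (d ^ (r-1)) y ≠ Fin.last m := by
      intro hh
      rw [hh, Fin.val_last] at hzv
      omega
    rw [hc, Fin.coe_cycleRange_of_le (Fin.le_last _), if_neg hz, hzv,
      Fin.coe_cycleRange_of_lt (show x < (⟨r-1, by omega⟩ : Fin (m+1)) from
        Fin.lt_def.mpr (by show (x:ℕ) < r-1; omega))]
  · -- x = r - 1
    have hylast : y = Fin.last m := by
      apply Fin.ext
      rw [hyv, Nat.mod_eq_of_lt (by omega), Fin.val_last]
      omega
    have hfix : (d ^ (r-1)) y = y := by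
      rw [hylast, hd]
      exact cycleRange_pow_apply_of_gt _ _
        (Fin.lt_def.mpr (by simp only [Fin.val_last]; omega)) _
    have hxeq : x = (⟨r-1, by omega⟩ : Fin (m+1)) := Fin.ext hcase
    rw [hfix, hylast, hc, Fin.cycleRange_self, hxeq, Fin.cycleRange_self]
  · -- r - 1 < x
    have hyv' : (y : ℕ) = (x:ℕ) - r := by
      rw [hyv, show (x:ℕ) + (m+1-r) = ((x:ℕ) - r) + (m+1) by omega,
        Nat.add_mod_right, Nat.mod_eq_of_lt (by omega)]
    have hyle : y ≤ (⟨m-1, by omega⟩ : Fin (m+1)) := by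
      rw [Fin.le_def]; show (y:ℕ) ≤ m - 1; omega
    have hzv : ((d ^ (r-1)) y : ℕ) = (x:ℕ) - 1 := by
      rw [hd, cycleRange_pow_apply _ _ _ hyle]
      show ((y:ℕ) + (r-1)) % (m-1+1) = (x:ℕ) - 1
      rw [show (y:ℕ) + (r-1) = (x:ℕ) - 1 by omega, Nat.mod_eq_of_lt (by omega)]
    have hz : (d ^ (r-1)) y ≠ Fin.last m := by
      intro hh
      rw [hh, Fin.val_last] at hzv
      omega
    rw [hc, Fin.coe_cycleRange_of_le (Fin.le_last _), if_neg hz, hzv,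
      Fin.cycleRange_of_gt (show (⟨r-1, by omega⟩ : Fin (m+1)) < x from
        Fin.lt_def.mpr (by show r-1 < (x:ℕ); omega))]
    omega


/-- recycling identity. For `n ≥ 3` and `2 ≤ r ≤ n-1`,
`σ_n² · σ_{n-1}^{r-1} · σ_n^{n-r-1} = σ'_r` (products composed left-to-right); equivalently,
applying `σ_n` twice, then `σ_{n-1}` a total of `r-1` times, then `σ_n` a total of `n-r-1`
times to any string `a` yields `a·σ'_r`. -/
theorem stmt8 (n r : ℕ) (hn : 3 ≤ n) (hr2 : 2 ≤ r) (hr : r ≤ n - 1) :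
    (sigmaRot n n) ^ 2 * (sigmaRot n (n - 1)) ^ (r - 1) * (sigmaRot n n) ^ (n - r - 1)
      = primRot n r ∧
    ∀ a : Equiv.Perm (Fin n),
      a * ((sigmaRot n n) ^ 2 * (sigmaRot n (n - 1)) ^ (r - 1) * (sigmaRot n n) ^ (n - r - 1))
        = a * primRot n r := by
  obtain ⟨m, rfl⟩ : ∃ m, n = m + 1 := ⟨n - 1, by omega⟩
  have hm : 2 ≤ m := by omega
  have h1 : sigmaRot (m+1) (m+1) = Fin.cycleRange (Fin.last m) := by
    rw [sigmaRot, dif_pos (show m+1-1 < m+1 by omega)]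
    rfl
  have h2 : sigmaRot (m+1) (m+1-1) = Fin.cycleRange (⟨m-1, by omega⟩ : Fin (m+1)) := by
    rw [sigmaRot, dif_pos (show m+1-1-1 < m+1 by omega)]
    rfl
  have h3 : sigmaRot (m+1) r = Fin.cycleRange (⟨r-1, by omega⟩ : Fin (m+1)) := by
    rw [sigmaRot, dif_pos (show r-1 < m+1 by omega)]
  have key := keyLemma m r hm hr2 (by omega)
  rw [show m+1-r = (m+1-r-1) + 1 by omega] at key
  have main : (sigmaRot (m+1) (m+1)) ^ 2 * (sigmaRot (m+1) (m+1-1)) ^ (r-1)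
      * (sigmaRot (m+1) (m+1)) ^ (m+1-r-1) = primRot (m+1) r := by
    rw [primRot, h1, h2, h3, ← key, sq]
    group
  exact ⟨main, fun a => by rw [main]⟩
end

section
/- Let n ≥ 3 and let S = T, n−1, n−1 be a Hamilton sequence for the rotator graph PR_{n−1} whose last two entries equal n−1, with each prefix-rotation σ_r (r ≤ n−1) regarded as a permutation of {1,…,n} that fixes position n. Let a be a permutation of {1,…,n} (as a string) whose last symbol is x. Then: (1) nodes(a; T, n−1) equals the set of all permutations of {1,…,n} whose last symbol is x; and (2) nodes(a; T) equals that set with the single string a·σ_{n−1}^{−1} removed. -/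
open Equiv

/-- `nodes(a;S)`: the `|S|+1` strings visited when applying the rotations of `S`
successively to the string `a` (here with rotations acting as permutations of `Fin n`). -/
def nodesSet (n : ℕ) (a : Equiv.Perm (Fin n)) (S : List ℕ) : Set (Equiv.Perm (Fin n)) :=
  {b | ∃ i ≤ S.length, b = a * partialProd n S i}

/-! Lifted along `Fin.castSucc`, the partial products of a Hamilton sequence for `PR_{n-1}` are
`(n-1)!` distinct permutations of `Fin n` fixing the last position, hence all of them, so
`a` times them sweeps out exactly the strings whose last symbol is that of `a`. As the total
product is the identity and the sequence ends in `n-1`, the node just before returning to `a`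
is `a·σ_{n-1}⁻¹`. -/

open Equiv.Perm

theorem val_sigmaRot {n r : ℕ} (hr : r ≤ n) (i : Fin n) :
    (sigmaRot n r i : ℕ) =
      if (i : ℕ) + 1 < r then (i : ℕ) + 1 else if (i : ℕ) + 1 = r then 0 else i := by
  have hn := i.pos
  rw [sigmaRot, dif_pos (by omega)]
  rcases lt_trichotomy (i : ℕ) (r - 1) with h | h | h
  · rw [Fin.coe_cycleRange_of_lt (Fin.lt_def.mpr h)]
    split_ifs <;> omega
  · rw [Fin.coe_cycleRange_of_le (Fin.le_def.mpr h.le), if_pos (Fin.ext h)]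
    split_ifs <;> omega
  · rw [Fin.cycleRange_of_gt (Fin.lt_def.mpr h)]
    split_ifs <;> omega

theorem sigmaRot_succ_castSucc {m r : ℕ} (hr : r ≤ m) (i : Fin m) :
    sigmaRot (m + 1) r i.castSucc = (sigmaRot m r i).castSucc := by
  ext
  simp only [val_sigmaRot hr, val_sigmaRot (hr.trans m.le_succ), Fin.val_castSucc]

theorem sigmaRot_succ_last {m r : ℕ} (hr : r ≤ m) :
    sigmaRot (m + 1) r (Fin.last m) = Fin.last m := by
  ext
  rw [val_sigmaRot (hr.trans m.le_succ), Fin.val_last]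
  split_ifs <;> omega

theorem viaEmbeddingHom_castSuccEmb_sigmaRot {m r : ℕ} (hr : r ≤ m) :
    viaEmbeddingHom Fin.castSuccEmb (sigmaRot m r) = sigmaRot (m + 1) r := by
  ext j : 1
  rw [viaEmbeddingHom_apply]
  induction j using Fin.lastCases with
  | last =>
    rw [viaEmbedding_apply_of_notMem _ _ _ (by simp [Fin.range_castSucc]), sigmaRot_succ_last hr]
  | cast i =>
    exact (viaEmbedding_apply _ _ i).trans (sigmaRot_succ_castSucc hr i).symm

theorem viaEmbeddingHom_castSuccEmb_partialProd {m : ℕ} {S : List ℕ} (hS : ∀ r ∈ S, r ≤ m)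
    (i : ℕ) : viaEmbeddingHom Fin.castSuccEmb (partialProd m S i) = partialProd (m + 1) S i := by
  rw [partialProd, partialProd, map_list_prod, List.map_map]
  exact congrArg List.prod <| List.map_congr_left fun r hr =>
    viaEmbeddingHom_castSuccEmb_sigmaRot (hS r (List.mem_of_mem_take hr))

theorem partialProd_succ_apply_last {m : ℕ} {S : List ℕ} (hS : ∀ r ∈ S, r ≤ m) (i : ℕ) :
    partialProd (m + 1) S i (Fin.last m) = Fin.last m := by
  rw [← viaEmbeddingHom_castSuccEmb_partialProd hS, viaEmbeddingHom_apply]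
  exact viaEmbedding_apply_of_notMem _ _ _ (by simp [Fin.range_castSucc])

theorem card_perm_fixing {α : Type*} [Fintype α] [DecidableEq α] (c : α) :
    Fintype.card {g : Perm α // g c = c} = (Fintype.card α - 1).factorial := by
  have e : Perm {x // x ≠ c} ≃ {g : Perm α // g c = c} :=
    (Perm.subtypeEquivSubtypePerm (· ≠ c)).trans (Equiv.subtypeEquivRight (by simp))
  rw [← Fintype.card_congr e, Fintype.card_perm, Fintype.card_subtype_compl,
    Fintype.card_subtype_eq]

theorem partialProd_append_of_le {n i : ℕ} {l₁ l₂ : List ℕ} (h : i ≤ l₁.length) :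
    partialProd n (l₁ ++ l₂) i = partialProd n l₁ i := by
  rw [partialProd, partialProd, List.take_append_of_le_length h]

theorem partialProd_length (n : ℕ) (l : List ℕ) :
    partialProd n l l.length = (l.map (sigmaRot n)).prod := by
  rw [partialProd, List.take_length]

theorem nodesSet_append_singleton (n : ℕ) (a : Perm (Fin n)) (l : List ℕ) (r : ℕ) :
    nodesSet n a (l ++ [r])
      = insert (a * ((l ++ [r]).map (sigmaRot n)).prod) (nodesSet n a l) := by
  have hlast : partialProd n (l ++ [r]) (l.length + 1) = ((l ++ [r]).map (sigmaRot n)).prod := by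
    simpa using partialProd_length n (l ++ [r])
  ext b
  simp only [nodesSet, Set.mem_ofPred_eq, Set.mem_insert_iff, List.length_append,
    List.length_singleton]
  constructor
  · rintro ⟨i, hi, rfl⟩
    rcases hi.lt_or_eq with hi | rfl
    · exact Or.inr ⟨i, by omega, by rw [partialProd_append_of_le (by omega)]⟩
    · exact Or.inl (by rw [hlast])
  · rintro (rfl | ⟨i, hi, rfl⟩)
    · exact ⟨l.length + 1, le_rfl, by rw [hlast]⟩
    · exact ⟨i, by omega, by rw [partialProd_append_of_le hi]⟩

namespace IsHamiltonSeq

variable {m : ℕ} {R : Set ℕ} {S : List ℕ}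

theorem le_of_mem (hS : IsHamiltonSeq m R S) (hR : R ⊆ Set.Iic m) {r : ℕ} (hr : r ∈ S) :
    r ≤ m :=
  hR (hS.2.1 r hr)

theorem partialProd_succ_inj (hS : IsHamiltonSeq m R S) (hR : R ⊆ Set.Iic m) {i j : ℕ}
    (hi : i < m.factorial) (hj : j < m.factorial)
    (h : partialProd (m + 1) S i = partialProd (m + 1) S j) : i = j := by
  refine hS.2.2.1 i hi j hj (viaEmbeddingHom_injective Fin.castSuccEmb ?_)
  rwa [viaEmbeddingHom_castSuccEmb_partialProd fun _ => hS.le_of_mem hR,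
    viaEmbeddingHom_castSuccEmb_partialProd fun _ => hS.le_of_mem hR]

theorem partialProd_succ_length (hS : IsHamiltonSeq m R S) (hR : R ⊆ Set.Iic m) :
    partialProd (m + 1) S S.length = 1 := by
  rw [← viaEmbeddingHom_castSuccEmb_partialProd fun _ => hS.le_of_mem hR, hS.2.2.2, map_one]

theorem exists_partialProd_succ_eq (hS : IsHamiltonSeq m R S) (hR : R ⊆ Set.Iic m)
    {g : Perm (Fin (m + 1))} (hg : g (Fin.last m) = Fin.last m) :
    ∃ i < m.factorial, partialProd (m + 1) S i = g := by
  let f : Fin m.factorial → {g : Perm (Fin (m + 1)) // g (Fin.last m) = Fin.last m} :=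
    fun i => ⟨partialProd (m + 1) S i, partialProd_succ_apply_last (fun _ => hS.le_of_mem hR) i⟩
  have hf : f.Bijective := by
    refine (Fintype.bijective_iff_injective_and_card f).mpr ⟨fun i j h => ?_, ?_⟩
    · exact Fin.ext (hS.partialProd_succ_inj hR i.2 j.2 (congrArg Subtype.val h))
    · rw [card_perm_fixing, Fintype.card_fin, Fintype.card_fin, Nat.add_sub_cancel]
  obtain ⟨i, hi⟩ := hf.2 ⟨g, hg⟩
  exact ⟨i, i.2, congrArg Subtype.val hi⟩

theorem nodesSet_eq_of_append_singleton {l : List ℕ} {r : ℕ} (hS : IsHamiltonSeq m R (l ++ [r]))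
    (hR : R ⊆ Set.Iic m) (a : Perm (Fin (m + 1))) :
    nodesSet (m + 1) a l = {b | b (Fin.last m) = a (Fin.last m)} := by
  have hlen : l.length + 1 = m.factorial := by simpa using hS.1
  ext b
  constructor
  · rintro ⟨i, hi, rfl⟩
    rw [Set.mem_ofPred_eq, Perm.mul_apply, ← partialProd_append_of_le (l₂ := [r]) hi,
      partialProd_succ_apply_last (fun _ => hS.le_of_mem hR)]
  · intro (hb : b (Fin.last m) = a (Fin.last m))
    obtain ⟨i, hi, hg⟩ := hS.exists_partialProd_succ_eq hR (g := a⁻¹ * b)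
      (by rw [Perm.mul_apply, Perm.inv_eq_iff_eq, hb])
    refine ⟨i, by omega, ?_⟩
    rw [← partialProd_append_of_le (l₂ := [r]) (by omega), hg, mul_inv_cancel_left]

theorem prod_map_sigmaRot_eq_inv {l : List ℕ} {r : ℕ} (hS : IsHamiltonSeq m R (l ++ [r]))
    (hR : R ⊆ Set.Iic m) : (l.map (sigmaRot (m + 1))).prod = (sigmaRot (m + 1) r)⁻¹ := by
  have h := hS.partialProd_succ_length hR
  rw [partialProd_length, List.map_append, List.prod_append, List.map_singleton,
    List.prod_singleton] at h
  exact eq_inv_of_mul_eq_one_left h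

theorem nodesSet_eq_of_append_pair {l : List ℕ} {s r : ℕ}
    (hS : IsHamiltonSeq m R (l ++ [s, r])) (hR : R ⊆ Set.Iic m) (a : Perm (Fin (m + 1))) :
    nodesSet (m + 1) a l
      = {b | b (Fin.last m) = a (Fin.last m)} \ {a * (sigmaRot (m + 1) r)⁻¹} := by
  have hS' : IsHamiltonSeq m R (l ++ [s] ++ [r]) := by simpa using hS
  have hlen : l.length + 2 = m.factorial := by simpa using hS.1
  rw [← hS'.nodesSet_eq_of_append_singleton hR a, nodesSet_append_singleton,
    ← hS'.prod_map_sigmaRot_eq_inv hR, Set.insert_sdiff_self_of_notMem]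
  rintro ⟨i, hi, h⟩
  have hls : (l ++ [s]).length = l.length + 1 := by simp
  rw [mul_right_inj, ← partialProd_length, ← partialProd_append_of_le (l₂ := [s]) hi,
    ← partialProd_append_of_le (l₁ := l ++ [s]) (l₂ := [r]) le_rfl,
    ← partialProd_append_of_le (l₁ := l ++ [s]) (l₂ := [r]) (by omega)] at h
  have := hS'.partialProd_succ_inj hR (by omega) (by omega) h
  omega

end IsHamiltonSeq

theorem lastVal_eq_val_apply_last {m : ℕ} (b : Perm (Fin (m + 1))) :
    lastVal b = b (Fin.last m) := by
  rw [lastVal, dif_pos m.succ_pos]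
  rfl

theorem stmt11_general (n : ℕ) (T : List ℕ)
    (hS : IsHamiltonSeq (n - 1) {r | 2 ≤ r ∧ r ≤ n - 1} (T ++ [n - 1, n - 1]))
    (a : Equiv.Perm (Fin n)) :
    nodesSet n a (T ++ [n - 1]) = {b : Equiv.Perm (Fin n) | lastVal b = lastVal a} ∧
    nodesSet n a T
      = {b : Equiv.Perm (Fin n) | lastVal b = lastVal a} \ {a * (sigmaRot n (n - 1))⁻¹} := by
  obtain ⟨m, rfl⟩ : ∃ m, n = m + 1 := Nat.exists_eq_add_one.mpr <| Nat.pos_of_ne_zero <| by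
    rintro rfl
    simpa using hS.1
  rw [Nat.add_sub_cancel] at hS ⊢
  have hR : {r | 2 ≤ r ∧ r ≤ m} ⊆ Set.Iic m := fun _ hr => hr.2
  simp only [lastVal_eq_val_apply_last, Fin.val_inj]
  exact ⟨IsHamiltonSeq.nodesSet_eq_of_append_singleton (by simpa using hS) hR a,
    hS.nodesSet_eq_of_append_pair hR a⟩

/-- Let `n ≥ 3` and let `S = T,n-1,n-1` be a Hamilton sequence for
`PR_{n-1}`, with each `σ_r` (`r ≤ n-1`) regarded as a permutation of `{1,…,n}` fixing the
last position. For a string `a` with last symbol `x`: (1) `nodes(a; T,n-1)` is the set of all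
strings with last symbol `x`; (2) `nodes(a; T)` is that set minus `{a·σ_{n-1}⁻¹}`. -/
theorem stmt11 (n : ℕ) (hn : 3 ≤ n) (T : List ℕ)
    (hS : IsHamiltonSeq (n - 1) {r | 2 ≤ r ∧ r ≤ n - 1} (T ++ [n - 1, n - 1]))
    (a : Equiv.Perm (Fin n)) :
    nodesSet n a (T ++ [n - 1]) = {b : Equiv.Perm (Fin n) | lastVal b = lastVal a} ∧
    nodesSet n a T
      = {b : Equiv.Perm (Fin n) | lastVal b = lastVal a} \ {a * (sigmaRot n (n - 1))⁻¹} :=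
  stmt11_general n T hS a
end

section
/- Let n ≥ 3 and let R ⊆ {2,…,n−1} with n−1 ∈ R. If S is a Hamilton sequence for the restricted rotator graph RR_{n−1}(R) whose last two entries both equal n−1, then for every m ∈ {2,3,…,n}, the sequence rewind_m(S) is a Hamilton sequence for the restricted incomplete rotator graph RIR_n(R ∪ {n}, m). -/
open Equiv

/-!
Write `c = σ_{n-1}`, `τ` for the transposition of the last two positions and `ρ = n n-1 ⋯ 1`.
Since `σ_n = c τ`, the blocks `(T, n-1, n)` and `(T, n)` of `rewind_m(S)` have products `τ` and
`c⁻¹ τ`. Because `S` is Hamilton for `RR_{n-1}(R)`, the walk along `(T, n-1, n)` from any `a`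
visits exactly the strings with the same last symbol as `a`, and the walk along `(T, n)` visits
them all except `a c⁻¹`. So the walk along `rewind_m(S)` from `ρ` covers the strings ending in
`1`, then those ending in `2, …, m-1` (minus one string each), then those ending in `m`; the final
run of `n`s visits the missing strings, since `(c⁻¹ τ)^(t+1) τ (c τ)^t = c⁻¹`. The walk has length
`m (n-1)!`, which is the number of strings with last symbol at most `m`, so no string is visited
twice.
-/

namespace Rewind

section PartialProd

variable {n : ℕ}

lemma partialProd_length (U : List ℕ) :
    partialProd n U U.length = (U.map (sigmaRot n)).prod := by
  simp [partialProd]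

lemma partialProd_append_of_le {A : List ℕ} (B : List ℕ) {i : ℕ} (h : i ≤ A.length) :
    partialProd n (A ++ B) i = partialProd n A i := by
  simp [partialProd, List.take_append_of_le_length h]

lemma partialProd_append_length_add (A B : List ℕ) (i : ℕ) :
    partialProd n (A ++ B) (A.length + i)
      = (A.map (sigmaRot n)).prod * partialProd n B i := by
  simp [partialProd, List.take_append, List.take_of_length_le]

lemma partialProd_replicate (r : ℕ) {k i : ℕ} (hi : i ≤ k) :
    partialProd n (List.replicate k r) i = sigmaRot n r ^ i := by
  simp [partialProd, List.take_replicate, Nat.min_eq_left hi]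

end PartialProd

/-- The strings visited by the walk from `a` along `U`, excluding the one it ends at. -/
def visited (n : ℕ) (a : Perm (Fin n)) (U : List ℕ) : Set (Perm (Fin n)) :=
  {b | ∃ i < U.length, b = a * partialProd n U i}

section Visited

variable {n : ℕ}

lemma visited_eq_image (a : Perm (Fin n)) (U : List ℕ) :
    visited n a U = (fun i => a * partialProd n U i) '' Set.Iio U.length := by
  ext b
  simp [visited, eq_comm]

lemma ncard_visited_le (a : Perm (Fin n)) (U : List ℕ) : (visited n a U).ncard ≤ U.length := by
  rw [visited_eq_image]
  exact (Set.ncard_image_le (Set.finite_Iio _)).trans (Set.ncard_Iio_nat _).le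

lemma injOn_of_length_le_ncard_visited {a : Perm (Fin n)} {U : List ℕ}
    (h : U.length ≤ (visited n a U).ncard) :
    Set.InjOn (fun i => a * partialProd n U i) (Set.Iio U.length) := by
  rw [visited_eq_image] at h
  refine Set.injOn_of_ncard_image_eq (le_antisymm (Set.ncard_image_le (Set.finite_Iio _)) ?_)
    (Set.finite_Iio _)
  rwa [Set.ncard_Iio_nat]

lemma visited_append (a : Perm (Fin n)) (A B : List ℕ) :
    visited n a (A ++ B) = visited n a A ∪ visited n (a * (A.map (sigmaRot n)).prod) B := by
  ext b
  simp only [visited, Set.mem_union, Set.mem_ofPred_eq, List.length_append]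
  constructor
  · rintro ⟨i, hi, rfl⟩
    rcases le_or_gt A.length i with h | h
    · obtain ⟨j, rfl⟩ := Nat.exists_eq_add_of_le h
      exact Or.inr ⟨j, by omega, by rw [partialProd_append_length_add, mul_assoc]⟩
    · exact Or.inl ⟨i, h, by rw [partialProd_append_of_le _ h.le]⟩
  · rintro (⟨i, hi, rfl⟩ | ⟨j, hj, rfl⟩)
    · exact ⟨i, by omega, by rw [partialProd_append_of_le _ hi.le]⟩
    · exact ⟨A.length + j, by omega, by rw [partialProd_append_length_add, mul_assoc]⟩

lemma visited_append_singleton (a : Perm (Fin n)) (A : List ℕ) (r : ℕ) :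
    visited n a (A ++ [r]) = visited n a A ∪ {a * (A.map (sigmaRot n)).prod} := by
  rw [visited_append]
  congr 1
  ext b
  simp [visited, partialProd]

lemma visited_append_singleton_congr (a : Perm (Fin n)) (A : List ℕ) (x y : ℕ) :
    visited n a (A ++ [x]) = visited n a (A ++ [y]) := by
  rw [visited_append_singleton, visited_append_singleton]

lemma visited_replicate (a : Perm (Fin n)) (k r : ℕ) :
    visited n a (List.replicate k r) = {b | ∃ t < k, b = a * sigmaRot n r ^ t} := by
  ext b
  simp only [visited, List.length_replicate, Set.mem_ofPred_eq]
  exact exists_congr fun t => and_congr_right fun ht => by rw [partialProd_replicate _ ht.le]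

lemma visited_subset_visited_flatten_replicate (a : Perm (Fin n)) (B : List ℕ)
    {j k : ℕ} (hj : j < k) :
    visited n (a * (B.map (sigmaRot n)).prod ^ j) B
      ⊆ visited n a (List.replicate k B).flatten := by
  induction j generalizing a k with
  | zero =>
    obtain ⟨k, rfl⟩ := Nat.exists_eq_add_of_lt hj
    simp [List.replicate_succ, visited_append]
  | succ j ih =>
    obtain ⟨k, rfl⟩ : ∃ k', k = k' + 1 := ⟨k - 1, by omega⟩
    rw [List.replicate_succ, List.flatten_cons, visited_append, pow_succ', ← mul_assoc]
    exact (ih _ (by omega)).trans Set.subset_union_right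

end Visited

noncomputable def extendLast (N : ℕ) : Perm (Fin N) →* Perm (Fin (N + 1)) :=
  Perm.viaEmbeddingHom Fin.castSuccEmb

section ExtendLast

variable {N : ℕ}

lemma extendLast_apply_castSucc (e : Perm (Fin N)) (i : Fin N) :
    extendLast N e i.castSucc = (e i).castSucc :=
  Perm.viaEmbedding_apply e Fin.castSuccEmb i

lemma extendLast_apply_last (e : Perm (Fin N)) : extendLast N e (Fin.last N) = Fin.last N :=
  Perm.viaEmbedding_apply_of_notMem e _ _ (by simp)

lemma extendLast_injective : Function.Injective (extendLast N) :=
  Perm.viaEmbeddingHom_injective _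

lemma extendLast_sigmaRot {r : ℕ} (hr1 : 1 ≤ r) (hr : r ≤ N) :
    extendLast N (sigmaRot N r) = sigmaRot (N + 1) r := by
  rw [sigmaRot, sigmaRot, dif_pos (by omega), dif_pos (by omega)]
  ext x
  induction x using Fin.lastCases with
  | last =>
    rw [extendLast_apply_last, Fin.cycleRange_of_gt (by simp [Fin.lt_def]; omega)]
  | cast i =>
    rw [extendLast_apply_castSucc, Fin.val_castSucc]
    rcases le_or_gt (i : ℕ) (r - 1) with h | h
    · rw [Fin.coe_cycleRange_of_le (show i ≤ ⟨r - 1, _⟩ from h),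
        Fin.coe_cycleRange_of_le (show i.castSucc ≤ ⟨r - 1, _⟩ from h)]
      simp [Fin.ext_iff]
    · rw [Fin.cycleRange_of_gt (show (⟨r - 1, _⟩ : Fin N) < i from h),
        Fin.cycleRange_of_gt (show (⟨r - 1, _⟩ : Fin (N + 1)) < i.castSucc from h)]
      simp

lemma partialProd_succ_eq_extendLast {U : List ℕ} (hU : ∀ r ∈ U, 1 ≤ r ∧ r ≤ N) (i : ℕ) :
    partialProd (N + 1) U i = extendLast N (partialProd N U i) := by
  rw [partialProd, partialProd, map_list_prod, List.map_map]
  congr 1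
  refine List.map_congr_left fun r hr => ?_
  obtain ⟨hr1, hrN⟩ := hU r (List.mem_of_mem_take hr)
  exact (extendLast_sigmaRot hr1 hrN).symm

end ExtendLast

lemma lastVal_eq_val_apply_last {N : ℕ} (b : Perm (Fin (N + 1))) :
    lastVal b = b (Fin.last N) := by
  rw [lastVal, dif_pos N.succ_pos]
  rfl

lemma apply_last_eq_revPerm_mul_apply_last {N j : ℕ} {b p : Perm (Fin (N + 1))} (hj : j ≤ N)
    (hb : lastVal b = j) (hp : (p (Fin.last N) : ℕ) = N - j) :
    b (Fin.last N) = (Fin.revPerm * p : Perm (Fin (N + 1))) (Fin.last N) := by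
  rw [lastVal_eq_val_apply_last] at hb
  simp [Fin.ext_iff, hb, hp]
  omega

lemma ncard_setOf_apply_last {N : ℕ} (P : Fin (N + 1) → Prop) :
    {b : Perm (Fin (N + 1)) | P (b (Fin.last N))}.ncard = {v | P v}.ncard * N.factorial := by
  -- `decomposeFin` splits off the image of `0`, so `(E b).1 = b (last N)`
  set E := (Equiv.mulRight (swap 0 (Fin.last N))).trans Perm.decomposeFin
  have hE : ∀ b, (E b).1 = b (Fin.last N) := fun b => by
    have h : Perm.decomposeFin.symm ((E b).1, (E b).2) = b * swap 0 (Fin.last N) := by simp [E]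
    rw [← swap_apply_left 0 (Fin.last N), ← Perm.mul_apply, ← h,
      Perm.decomposeFin_symm_apply_zero]
  have hpre : {b : Perm (Fin (N + 1)) | P (b (Fin.last N))} = E ⁻¹' ({v | P v} ×ˢ Set.univ) := by
    ext b
    simp [hE]
  rw [hpre, Set.ncard_preimage_of_injective_subset_range E.injective (by simp),
    Set.ncard_prod, Set.ncard_univ, Nat.card_perm, Nat.card_eq_fintype_card, Fintype.card_fin]

lemma ncard_setOf_lastVal_lt {N m : ℕ} (hm : m ≤ N + 1) :
    {b : Perm (Fin (N + 1)) | lastVal b < m}.ncard = m * N.factorial := by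
  simp_rw [lastVal_eq_val_apply_last]
  rw [ncard_setOf_apply_last (fun v => (v : ℕ) < m), Set.ncard_eq_toFinset_card',
    Set.toFinset_ofPred, Fin.card_filter_val_lt, min_eq_right hm]

lemma visited_eq_of_isHamiltonSeq {N : ℕ} {R : Set ℕ} {S : List ℕ} (hS : IsHamiltonSeq N R S)
    (hSN : ∀ r ∈ S, 1 ≤ r ∧ r ≤ N) (a : Perm (Fin (N + 1))) :
    visited (N + 1) a S = {b | b (Fin.last N) = a (Fin.last N)} := by
  obtain ⟨hlen, -, hinj, -⟩ := hS
  have hsub : visited (N + 1) a S ⊆ {b | b (Fin.last N) = a (Fin.last N)} := by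
    rintro b ⟨i, -, rfl⟩
    simp [partialProd_succ_eq_extendLast hSN, extendLast_apply_last]
  refine Set.eq_of_subset_of_ncard_le hsub ?_ (Set.toFinite _)
  have hinjOn : Set.InjOn (fun i => a * partialProd (N + 1) S i) (Set.Iio S.length) :=
    fun i hi j hj hij => by
      simp only [partialProd_succ_eq_extendLast hSN, mul_right_inj] at hij
      exact hinj i (hlen ▸ hi) j (hlen ▸ hj) (extendLast_injective hij)
  rw [visited_eq_image, hinjOn.ncard_image, Set.ncard_Iio_nat, hlen,
    ncard_setOf_apply_last (· = a (Fin.last N)), Set.ofPred_eq_eq_singleton, Set.ncard_singleton,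
    one_mul]

lemma prod_map_sigmaRot_succ_of_isHamiltonSeq {N : ℕ} {R : Set ℕ} {S : List ℕ}
    (hS : IsHamiltonSeq N R S) (hSN : ∀ r ∈ S, 1 ≤ r ∧ r ≤ N) :
    (S.map (sigmaRot (N + 1))).prod = 1 := by
  rw [← partialProd_length, partialProd_succ_eq_extendLast hSN, hS.2.2.2, map_one]

lemma isHamiltonSeqRIR_of_subset_visited {N m : ℕ} (hm : m ≤ N + 1) {R : Set ℕ} {U : List ℕ}
    (hlen : U.length = m * N.factorial) (hR : ∀ r ∈ U, r ∈ R)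
    (hcover : {b | lastVal b < m} ⊆ visited (N + 1) Fin.revPerm U)
    (hprod : (U.map (sigmaRot (N + 1))).prod = 1) :
    IsHamiltonSeqRIR (N + 1) m R U := by
  have hcard : {b : Perm (Fin (N + 1)) | lastVal b < m}.ncard = U.length := by
    rw [ncard_setOf_lastVal_lt hm, hlen]
  have heq : visited (N + 1) Fin.revPerm U = {b | lastVal b < m} :=
    (Set.eq_of_subset_of_ncard_le hcover (hcard ▸ ncard_visited_le _ _) (Set.toFinite _)).symm
  refine ⟨by rw [hlen, Nat.add_sub_cancel], hR, fun i hi j hj hij => ?_, heq, ?_⟩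
  · exact injOn_of_length_le_ncard_visited (by rw [heq, hcard]) hi hj hij
  · rw [partialProd_length, hprod, mul_one]

lemma val_sigmaRot_of_lt {n r : ℕ} (hrn : r ≤ n) {x : Fin n} (hx : (x : ℕ) + 1 < r) :
    (sigmaRot n r x : ℕ) = x + 1 := by
  rw [sigmaRot, dif_pos (by omega)]
  exact Fin.coe_cycleRange_of_lt (show x < ⟨r - 1, _⟩ by simp [Fin.lt_def]; omega)

lemma sigmaRot_succ_eq_mul_swap {n r : ℕ} (hr : 1 ≤ r) (hrn : r < n) :
    sigmaRot n (r + 1) = sigmaRot n r * swap ⟨r - 1, by omega⟩ ⟨r, hrn⟩ := by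
  rw [sigmaRot, sigmaRot, dif_pos (by omega), dif_pos (by omega)]
  ext x
  rw [Perm.mul_apply]
  rcases lt_trichotomy (x : ℕ) (r - 1) with hx | hx | hx
  · rw [swap_apply_of_ne_of_ne (by simp [Fin.ext_iff]; omega) (by simp [Fin.ext_iff]; omega),
      Fin.coe_cycleRange_of_lt (show x < ⟨r + 1 - 1, _⟩ by simp [Fin.lt_def]; omega),
      Fin.coe_cycleRange_of_lt (show x < ⟨r - 1, _⟩ from hx)]
  · rw [show x = ⟨r - 1, by omega⟩ from Fin.ext hx, swap_apply_left,
      Fin.coe_cycleRange_of_lt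
        (show (⟨r - 1, _⟩ : Fin n) < ⟨r + 1 - 1, _⟩ by simp [Fin.lt_def]; omega),
      Fin.cycleRange_of_gt (show (⟨r - 1, _⟩ : Fin n) < ⟨r, hrn⟩ by simp [Fin.lt_def]; omega)]
    simp
    omega
  · rcases eq_or_lt_of_le (show r ≤ (x : ℕ) by omega) with hx | hx
    · rw [show x = ⟨r, hrn⟩ from Fin.ext hx.symm, swap_apply_right,
        Fin.coe_cycleRange_of_le (le_refl _), Fin.coe_cycleRange_of_le (le_of_eq (by simp))]
      simp
    · rw [swap_apply_of_ne_of_ne (by simp [Fin.ext_iff]; omega) (by simp [Fin.ext_iff]; omega),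
        Fin.cycleRange_of_gt (show (⟨r + 1 - 1, _⟩ : Fin n) < x by simp [Fin.lt_def]; omega),
        Fin.cycleRange_of_gt (show (⟨r - 1, _⟩ : Fin n) < x by simp [Fin.lt_def]; omega)]

section Involution

variable {G : Type*} [Group G] {c τ : G}

lemma inv_mul_pow_succ_mul_mul_pow (hτ : τ * τ = 1) (t : ℕ) :
    (c⁻¹ * τ) ^ (t + 1) * τ * (c * τ) ^ t = c⁻¹ := by
  induction t with
  | zero => simp [mul_assoc, hτ]
  | succ t ih =>
    calc (c⁻¹ * τ) ^ (t + 1 + 1) * τ * (c * τ) ^ (t + 1)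
        = c⁻¹ * τ * ((c⁻¹ * τ) ^ (t + 1) * τ * (c * τ) ^ t) * (c * τ) := by
          rw [pow_succ' _ (t + 1), pow_succ (c * τ) t]
          simp only [mul_assoc]
      _ = c⁻¹ := by rw [ih, mul_assoc (c⁻¹ * τ), inv_mul_cancel_left, mul_assoc, hτ, mul_one]

lemma inv_mul_pow_add_succ_mul_mul_pow (hτ : τ * τ = 1) (k t : ℕ) :
    (c⁻¹ * τ) ^ (k + (t + 1)) * τ * (c * τ) ^ t = (c⁻¹ * τ) ^ k * c⁻¹ := by
  rw [pow_add, mul_assoc, mul_assoc, ← mul_assoc _ τ, inv_mul_pow_succ_mul_mul_pow hτ]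

lemma mul_inv_mul_pow_mul_mul_pow (hτ : τ * τ = 1) (t : ℕ) :
    τ * (c⁻¹ * τ) ^ t * τ * (c * τ) ^ t = 1 := by
  have h := inv_mul_pow_succ_mul_mul_pow hτ t (c := c)
  rwa [pow_succ', mul_assoc, mul_assoc, mul_assoc, inv_mul_eq_iff_eq_mul, mul_inv_cancel,
    ← mul_assoc, ← mul_assoc] at h

end Involution

def swapLastTwo (N : ℕ) : Perm (Fin (N + 1)) := swap ⟨N - 1, by omega⟩ (Fin.last N)

section SwapLastTwo

variable {N : ℕ}

lemma swapLastTwo_mul_self : swapLastTwo N * swapLastTwo N = 1 := swap_mul_self _ _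

lemma sigmaRot_succ_eq_mul_swapLastTwo (hN : 1 ≤ N) :
    sigmaRot (N + 1) (N + 1) = sigmaRot (N + 1) N * swapLastTwo N :=
  sigmaRot_succ_eq_mul_swap hN N.lt_succ_self

lemma swapLastTwo_mul_pow_apply_last {k : ℕ} (hk : k ≤ N - 1) :
    (swapLastTwo N * ((sigmaRot (N + 1) N)⁻¹ * swapLastTwo N) ^ k) (Fin.last N)
      = ⟨N - 1 - k, by omega⟩ := by
  induction k with
  | zero => simp [swapLastTwo]
  | succ k ih =>
    have hstep : swapLastTwo N * ((sigmaRot (N + 1) N)⁻¹ * swapLastTwo N) ^ (k + 1)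
        = swapLastTwo N * (sigmaRot (N + 1) N)⁻¹
          * (swapLastTwo N * ((sigmaRot (N + 1) N)⁻¹ * swapLastTwo N) ^ k) := by
      simp only [pow_succ', mul_assoc]
    have hc : (sigmaRot (N + 1) N)⁻¹ ⟨N - 1 - k, by omega⟩ = ⟨N - 1 - (k + 1), by omega⟩ := by
      rw [Perm.inv_eq_iff_eq, Fin.ext_iff, val_sigmaRot_of_lt (by omega) (by simp; omega)]
      simp
      omega
    rw [hstep, Perm.mul_apply, ih (by omega), Perm.mul_apply, hc, swapLastTwo,
      swap_apply_of_ne_of_ne (by simp [Fin.ext_iff]; omega) (by simp [Fin.ext_iff]; omega)]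

end SwapLastTwo

section RewindOp

variable {N : ℕ} {T : List ℕ}

lemma rewindOp_append_top_top (μ : ℕ) :
    rewindOp (N + 1) (μ + 2) (T ++ [N, N])
      = (T ++ [N, N + 1]) ++ (List.replicate μ (T ++ [N + 1])).flatten ++ (T ++ [N, N + 1])
        ++ List.replicate μ (N + 1) := by
  simp [rewindOp]

lemma length_rewindOp_append_top_top (μ : ℕ) :
    (rewindOp (N + 1) (μ + 2) (T ++ [N, N])).length = (μ + 2) * (T ++ [N, N]).length := by
  simp [rewindOp_append_top_top, List.length_flatten]
  ring

lemma mem_rewindOp_append_top_top {μ r : ℕ} (hr : r ∈ rewindOp (N + 1) (μ + 2) (T ++ [N, N])) :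
    r ∈ T ++ [N, N] ∨ r = N + 1 := by
  simp [rewindOp_append_top_top, List.mem_flatten] at hr
  aesop

lemma prod_append_top_succ (hN : 1 ≤ N)
    (hT : (T.map (sigmaRot (N + 1))).prod = (sigmaRot (N + 1) N)⁻¹ * (sigmaRot (N + 1) N)⁻¹) :
    ((T ++ [N, N + 1]).map (sigmaRot (N + 1))).prod = swapLastTwo N := by
  simp [hT, sigmaRot_succ_eq_mul_swapLastTwo hN, mul_assoc]

lemma prod_append_succ (hN : 1 ≤ N)
    (hT : (T.map (sigmaRot (N + 1))).prod = (sigmaRot (N + 1) N)⁻¹ * (sigmaRot (N + 1) N)⁻¹) :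
    ((T ++ [N + 1]).map (sigmaRot (N + 1))).prod
      = (sigmaRot (N + 1) N)⁻¹ * swapLastTwo N := by
  simp [hT, sigmaRot_succ_eq_mul_swapLastTwo hN, mul_assoc]

lemma prod_flatten_replicate_append_succ (hN : 1 ≤ N)
    (hT : (T.map (sigmaRot (N + 1))).prod = (sigmaRot (N + 1) N)⁻¹ * (sigmaRot (N + 1) N)⁻¹)
    (μ : ℕ) :
    (((List.replicate μ (T ++ [N + 1])).flatten).map (sigmaRot (N + 1))).prod
      = ((sigmaRot (N + 1) N)⁻¹ * swapLastTwo N) ^ μ := by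
  rw [List.map_flatten, List.prod_flatten, List.map_replicate, List.map_replicate,
    List.prod_replicate, prod_append_succ hN hT]

lemma prod_rewindOp_append_top_top (hN : 1 ≤ N)
    (hT : (T.map (sigmaRot (N + 1))).prod = (sigmaRot (N + 1) N)⁻¹ * (sigmaRot (N + 1) N)⁻¹)
    (μ : ℕ) :
    ((rewindOp (N + 1) (μ + 2) (T ++ [N, N])).map (sigmaRot (N + 1))).prod = 1 := by
  rw [rewindOp_append_top_top, List.map_append, List.map_append, List.map_append,
    List.prod_append, List.prod_append, List.prod_append,
    prod_flatten_replicate_append_succ hN hT, prod_append_top_succ hN hT,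
    List.map_replicate, List.prod_replicate, sigmaRot_succ_eq_mul_swapLastTwo hN]
  exact mul_inv_mul_pow_mul_mul_pow swapLastTwo_mul_self μ

lemma visited_append_top_succ
    (hfiber : ∀ a, visited (N + 1) a (T ++ [N, N]) = {b | b (Fin.last N) = a (Fin.last N)})
    (a : Perm (Fin (N + 1))) :
    visited (N + 1) a (T ++ [N, N + 1]) = {b | b (Fin.last N) = a (Fin.last N)} := by
  rw [← hfiber, show T ++ [N, N + 1] = T ++ [N] ++ [N + 1] by simp,
    show T ++ [N, N] = T ++ [N] ++ [N] by simp, visited_append_singleton_congr]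

lemma visited_append_succ_union
    (hT : (T.map (sigmaRot (N + 1))).prod = (sigmaRot (N + 1) N)⁻¹ * (sigmaRot (N + 1) N)⁻¹)
    (hfiber : ∀ a, visited (N + 1) a (T ++ [N, N]) = {b | b (Fin.last N) = a (Fin.last N)})
    (a : Perm (Fin (N + 1))) :
    visited (N + 1) a (T ++ [N + 1]) ∪ {a * (sigmaRot (N + 1) N)⁻¹}
      = {b | b (Fin.last N) = a (Fin.last N)} := by
  rw [← hfiber, show T ++ [N, N] = T ++ [N] ++ [N] by simp, visited_append_singleton _ (T ++ [N]),
    visited_append_singleton_congr (y := N)]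
  simp [hT]

lemma visited_rewindOp_append_top_top (hN : 1 ≤ N)
    (hT : (T.map (sigmaRot (N + 1))).prod = (sigmaRot (N + 1) N)⁻¹ * (sigmaRot (N + 1) N)⁻¹)
    (hfiber : ∀ a, visited (N + 1) a (T ++ [N, N]) = {b | b (Fin.last N) = a (Fin.last N)})
    (μ : ℕ) (a : Perm (Fin (N + 1))) :
    visited (N + 1) a (rewindOp (N + 1) (μ + 2) (T ++ [N, N]))
      = {b | b (Fin.last N) = a (Fin.last N)}
        ∪ visited (N + 1) (a * swapLastTwo N) (List.replicate μ (T ++ [N + 1])).flatten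
        ∪ {b | b (Fin.last N) = (a * (swapLastTwo N
            * ((sigmaRot (N + 1) N)⁻¹ * swapLastTwo N) ^ μ)) (Fin.last N)}
        ∪ {b | ∃ t < μ, b = a * (swapLastTwo N
            * ((sigmaRot (N + 1) N)⁻¹ * swapLastTwo N) ^ μ * swapLastTwo N)
            * (sigmaRot (N + 1) N * swapLastTwo N) ^ t} := by
  have hp₁ := prod_append_top_succ hN hT
  have hp₂ : (((T ++ [N, N + 1]) ++ (List.replicate μ (T ++ [N + 1])).flatten).map
      (sigmaRot (N + 1))).prod
        = swapLastTwo N * ((sigmaRot (N + 1) N)⁻¹ * swapLastTwo N) ^ μ := by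
    rw [List.map_append, List.prod_append, hp₁, prod_flatten_replicate_append_succ hN hT]
  have hp₃ : (((T ++ [N, N + 1]) ++ (List.replicate μ (T ++ [N + 1])).flatten
      ++ (T ++ [N, N + 1])).map (sigmaRot (N + 1))).prod
        = swapLastTwo N * ((sigmaRot (N + 1) N)⁻¹ * swapLastTwo N) ^ μ * swapLastTwo N := by
    rw [List.map_append, List.prod_append, hp₂, hp₁]
  rw [rewindOp_append_top_top, visited_append, hp₃, visited_append, hp₂, visited_append, hp₁,
    visited_append_top_succ hfiber, visited_append_top_succ hfiber, visited_replicate,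
    sigmaRot_succ_eq_mul_swapLastTwo hN]

lemma subset_visited_rewindOp_append_top_top (hN : 1 ≤ N) {μ : ℕ} (hμ : μ + 1 ≤ N)
    (hT : (T.map (sigmaRot (N + 1))).prod = (sigmaRot (N + 1) N)⁻¹ * (sigmaRot (N + 1) N)⁻¹)
    (hfiber : ∀ a, visited (N + 1) a (T ++ [N, N]) = {b | b (Fin.last N) = a (Fin.last N)}) :
    {b | lastVal b < μ + 2}
      ⊆ visited (N + 1) Fin.revPerm (rewindOp (N + 1) (μ + 2) (T ++ [N, N])) := by
  set c := sigmaRot (N + 1) N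
  set τ := swapLastTwo N
  rw [visited_rewindOp_append_top_top hN hT hfiber]
  intro b hb
  obtain ⟨j, hj⟩ : ∃ j, lastVal b = j := ⟨_, rfl⟩
  have hjμ : j < μ + 2 := hj ▸ hb
  rcases j with _ | k
  · refine Or.inl (Or.inl (Or.inl ?_))
    simpa using apply_last_eq_revPerm_mul_apply_last (p := 1) (by omega) hj (by simp)
  have hk := apply_last_eq_revPerm_mul_apply_last (p := τ * (c⁻¹ * τ) ^ k) (by omega) hj
    (by rw [swapLastTwo_mul_pow_apply_last (by omega), Fin.val_mk]; omega)
  rcases (show k ≤ μ by omega).eq_or_lt with rfl | hkμ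
  · exact Or.inl (Or.inr hk)
  have hk' : b ∈ visited (N + 1) (Fin.revPerm * (τ * (c⁻¹ * τ) ^ k)) (T ++ [N + 1])
      ∪ {Fin.revPerm * (τ * (c⁻¹ * τ) ^ k) * c⁻¹} := by
    rw [visited_append_succ_union hT hfiber]
    exact hk
  rcases hk' with hk | hk
  · refine Or.inl (Or.inl (Or.inr (visited_subset_visited_flatten_replicate _ _ hkμ ?_)))
    rwa [prod_append_succ hN hT, mul_assoc]
  · -- the string missed by the `k`-th copy of `(T, n)` is visited by the final run of `n`s
    obtain ⟨t, rfl⟩ := Nat.exists_eq_add_of_lt hkμ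
    refine Or.inr ⟨t, by omega, ?_⟩
    rw [Set.mem_singleton_iff.mp hk, add_assoc, mul_assoc, mul_assoc,
      ← inv_mul_pow_add_succ_mul_mul_pow swapLastTwo_mul_self k t]
    simp only [mul_assoc, τ, c]

end RewindOp

end Rewind

open Rewind in
theorem stmt14_general (n : ℕ) (hn : 3 ≤ n) (R : Set ℕ) (hR : R ⊆ {r | 2 ≤ r ∧ r ≤ n - 1})
    (S : List ℕ) (hS : IsHamiltonSeq (n - 1) R S)
    (hlast : ∃ T, S = T ++ [n - 1, n - 1]) (m : ℕ) (hm2 : 2 ≤ m) (hm : m ≤ n) :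
    IsHamiltonSeqRIR n m (R ∪ {n}) (rewindOp n m S) := by
  obtain ⟨N, rfl⟩ : ∃ N, n = N + 1 := ⟨n - 1, by omega⟩
  obtain ⟨μ, rfl⟩ : ∃ μ, m = μ + 2 := ⟨m - 2, by omega⟩
  obtain ⟨T, rfl⟩ := hlast
  simp only [Nat.add_sub_cancel] at hR hS ⊢
  have hSN : ∀ r ∈ T ++ [N, N], 1 ≤ r ∧ r ≤ N := fun r hr => by
    obtain ⟨h2, hrN⟩ := hR (hS.2.1 r hr)
    exact ⟨by omega, hrN⟩
  have hT : (T.map (sigmaRot (N + 1))).prod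
      = (sigmaRot (N + 1) N)⁻¹ * (sigmaRot (N + 1) N)⁻¹ := by
    have h := prod_map_sigmaRot_succ_of_isHamiltonSeq hS hSN
    rw [List.map_append, List.prod_append, mul_eq_one_iff_eq_inv] at h
    simpa using h
  refine isHamiltonSeqRIR_of_subset_visited hm
    (by rw [length_rewindOp_append_top_top, hS.1]) (fun r hr => ?_)
    (subset_visited_rewindOp_append_top_top (by omega) (by omega) hT
      (visited_eq_of_isHamiltonSeq hS hSN))
    (prod_rewindOp_append_top_top (by omega) hT μ)
  rcases mem_rewindOp_append_top_top hr with h | h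
  · exact Or.inl (hS.2.1 r h)
  · exact Or.inr h

/-- Let `n ≥ 3` and `R ⊆ {2,…,n-1}` with `n-1 ∈ R`. If `S` is a Hamilton
sequence for `RR_{n-1}(R)` whose last two entries both equal `n-1`, then for every
`m ∈ {2,…,n}`, `rewind_m(S)` is a Hamilton sequence for `RIR_n(R ∪ {n}, m)`. -/
theorem stmt14 (n : ℕ) (hn : 3 ≤ n) (R : Set ℕ) (hR : R ⊆ {r | 2 ≤ r ∧ r ≤ n - 1})
    (hmem : (n - 1) ∈ R) (S : List ℕ) (hS : IsHamiltonSeq (n - 1) R S)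
    (hlast : ∃ T, S = T ++ [n - 1, n - 1]) (m : ℕ) (hm2 : 2 ≤ m) (hm : m ≤ n) :
    IsHamiltonSeqRIR n m (R ∪ {n}) (rewindOp n m S) :=
  stmt14_general n hn R hR S hS hlast m hm2 hm
end
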